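/- Let $s\in(0,1)$, $p\in[1,\infty)$ with $sp<N$, and set $p^* = Np/(N-sp)$. Then there exists a constant $C=C(N,s,p)>0$ such that for every $u\in W^{s,p}(\mathbb{R}^N)$, $\|u\|_{L^{p^*}}^p \le C \int_{\mathbb{R}^N}\int_{\mathbb{R}^N} \frac{|u(x)-u(y)|^p}{|x-y|^{N+sp}}\,dx\,dy$. -/

import Mathlib

/-!
Fix `x` and a radius `R`. Averaging `|u x|^p ≤ κ (|u x - u y|^p + |u y|^p)` over `y` in the ball
`B(x, R)`, the first term is at most `R^(sp)` times `F x = ∫ |u x - u y|^p / |x - y|^(N + sp) dy`,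
and by Hölder the second is at most `R^(-(N - sp))` times `Λ^((N - sp)/N)`, where
`Λ = ∫ |u|^q` and `q = Np/(N - sp)`. Optimizing in `R` gives `|u x|^q ≤ K Λ^(sp/N) F x`;
integrating in `x` yields `Λ ≤ K Λ^(sp/N) [u]^p`, i.e. `Λ^((N - sp)/N) ≤ K [u]^p` when `Λ` is
finite. A general `u ∈ L^p` is reduced to this case through its truncations `min |u| k`, which have
finite `Λ` and smaller Gagliardo energy, followed by monotone convergence as `k → ∞`.
-/

open MeasureTheory Metric Module
open scoped ENNReal

namespace ENNReal

theorem LpAddConst_ne_zero (p : ℝ≥0∞) : LpAddConst p ≠ 0 := by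
  unfold LpAddConst; split_ifs <;> simp

theorem rpow_le_of_forall_le_rpow_mul_add_rpow_neg_mul {a t : ℝ} (ha : 0 ≤ a) (ht : 0 < t)
    {A B G : ℝ≥0∞} (hA₀ : A ≠ 0) (hA : A ≠ ∞) (hB : B ≠ ∞)
    (h : ∀ R : ℝ≥0∞, R ≠ 0 → R ≠ ∞ → B ≤ R ^ a * G + R ^ (-t) * A) :
    B ^ ((a + t) / t) ≤ 2 ^ ((a + t) / t) * A ^ (a / t) * G := by
  rcases eq_or_ne B 0 with rfl | hB₀
  · rw [zero_rpow_of_pos (by positivity)]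
    exact zero_le
  have hB₂ : B / 2 ≠ ∞ := div_ne_top hB two_ne_zero
  set X := A / (B / 2)
  have hX₀ : X ≠ 0 := by simp [X, hA₀, hB₂]
  have hX : X ≠ ∞ := div_ne_top hA (by simpa using hB₀)
  -- at the radius `X ^ t⁻¹` the second term equals `B / 2`
  have hR₀ : X ^ t⁻¹ ≠ 0 := by simp [rpow_eq_zero_iff, hX₀, hX]
  have hR : X ^ t⁻¹ ≠ ∞ := rpow_ne_top_of_nonneg (by positivity) hX
  have hsecond : (X ^ t⁻¹) ^ (-t) * A = B / 2 := by
    rw [← rpow_mul, show t⁻¹ * -t = -1 by field_simp, rpow_neg_one,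
      ENNReal.inv_div (.inl hB₂) (.inr hA₀), ENNReal.div_mul_cancel hA₀ hA]
  have hhalf : B / 2 ≤ X ^ (a / t) * G := by
    have hbound := h _ hR₀ hR
    rw [hsecond, ← rpow_mul, inv_mul_eq_div] at hbound
    nth_rewrite 1 [← ENNReal.add_halves B] at hbound
    exact (ENNReal.add_le_add_iff_right hB₂).1 hbound
  calc B ^ ((a + t) / t) = B ^ (a / t) * (2 * (B / 2)) := by
        rw [ENNReal.mul_div_cancel two_ne_zero ofNat_ne_top, add_div, div_self ht.ne',
          rpow_add _ _ hB₀ hB, rpow_one]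
    _ ≤ B ^ (a / t) * (2 * (X ^ (a / t) * G)) := by gcongr
    _ = 2 * (B * X) ^ (a / t) * G := by
        rw [mul_rpow_of_nonneg _ _ (by positivity)]; ring
    _ = 2 ^ ((a + t) / t) * A ^ (a / t) * G := by
        have hBX : B * X = 2 * A := by
          rw [← ENNReal.mul_div_cancel two_ne_zero ofNat_ne_top (b := B), mul_assoc,
            ENNReal.mul_div_cancel (by simpa using hB₀) hB₂]
        rw [hBX, mul_rpow_of_nonneg _ _ (by positivity), add_div, div_self ht.ne', add_comm,
          rpow_add _ _ two_ne_zero ofNat_ne_top, rpow_one]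
        ring

theorem rpow_one_sub_le_of_le_mul_rpow {x K : ℝ≥0∞} {α : ℝ} (hx₀ : x ≠ 0) (hx : x ≠ ∞)
    (h : x ≤ K * x ^ α) : x ^ (1 - α) ≤ K :=
  calc x ^ (1 - α) = x * x ^ (-α) := by rw [sub_eq_add_neg, rpow_add _ _ hx₀ hx, rpow_one]
    _ ≤ K * x ^ α * x ^ (-α) := by gcongr
    _ = K := by rw [mul_assoc, ← rpow_add _ _ hx₀ hx, add_neg_cancel, rpow_zero, mul_one]

end ENNReal

theorem setLIntegral_le_lintegral_rpow_mul_measure_rpow {α : Type*} [MeasurableSpace α]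
    {μ : Measure α} {f : α → ℝ≥0∞} (hf : AEMeasurable f μ) {θ : ℝ} (hθ₀ : 0 < θ) (hθ₁ : θ < 1)
    (s : Set α) :
    ∫⁻ x in s, f x ∂μ ≤ (∫⁻ x, f x ^ θ⁻¹ ∂μ) ^ θ * μ s ^ (1 - θ) := by
  have hconj := (Real.HolderConjugate.one_sub_inv_inv hθ₀ hθ₁).symm
  have := ENNReal.lintegral_mul_le_Lp_mul_Lq (μ.restrict s) hconj hf.restrict
    (aemeasurable_const (b := 1))
  simp only [Pi.mul_apply, mul_one, ENNReal.one_rpow, one_div, inv_inv, setLIntegral_one] at this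
  refine this.trans ?_
  gcongr
  exact Measure.restrict_le_self

theorem setLIntegral_ball_le_ofReal_rpow_mul_lintegral_div {E : Type*}
    [SeminormedAddCommGroup E] [MeasurableSpace E] [OpensMeasurableSpace E] {μ : Measure E}
    (f : E → ℝ≥0∞) (x : E) (r : ℝ) {β : ℝ} (hβ : 0 ≤ β) :
    ∫⁻ y in ball x r, f y ∂μ ≤
      ENNReal.ofReal (r ^ β) * ∫⁻ y, f y / ENNReal.ofReal (‖x - y‖ ^ β) ∂μ := by
  have hpointwise : ∀ y ∈ ball x r,
      f y ≤ ENNReal.ofReal (r ^ β) * (f y / ENNReal.ofReal (‖x - y‖ ^ β)) := by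
    intro y hy
    have hxy : ‖x - y‖ < r := by rwa [← dist_eq_norm, dist_comm]
    have hrβ : ENNReal.ofReal (r ^ β) ≠ 0 := by
      simpa using Real.rpow_pos_of_pos ((norm_nonneg _).trans_lt hxy) β
    calc f y = ENNReal.ofReal (r ^ β) * (f y / ENNReal.ofReal (r ^ β)) :=
          (ENNReal.mul_div_cancel hrβ ENNReal.ofReal_ne_top).symm
      _ ≤ _ := by gcongr
  calc ∫⁻ y in ball x r, f y ∂μ
      ≤ ∫⁻ y in ball x r, ENNReal.ofReal (r ^ β) * (f y / ENNReal.ofReal (‖x - y‖ ^ β)) ∂μ :=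
        setLIntegral_mono' measurableSet_ball hpointwise
    _ = ENNReal.ofReal (r ^ β) * ∫⁻ y in ball x r, f y / ENNReal.ofReal (‖x - y‖ ^ β) ∂μ :=
        lintegral_const_mul' _ _ ENNReal.ofReal_ne_top
    _ ≤ _ := by gcongr; exact Measure.restrict_le_self

theorem measure_ball_mul_rpow_enorm_le {E : Type*} [SeminormedAddCommGroup E] [MeasurableSpace E]
    [OpensMeasurableSpace E] {μ : Measure E} {u : E → ℝ} (hu : Measurable u) (x : E) (r : ℝ)
    {p β θ : ℝ} (hp : 0 ≤ p) (hβ : 0 ≤ β) (hθ₀ : 0 < θ) (hθ₁ : θ < 1) :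
    μ (ball x r) * ‖u x‖ₑ ^ p ≤ ENNReal.LpAddConst (ENNReal.ofReal p)⁻¹ *
      (ENNReal.ofReal (r ^ β) * ∫⁻ y, ‖u x - u y‖ₑ ^ p / ENNReal.ofReal (‖x - y‖ ^ β) ∂μ +
        (∫⁻ y, ‖u y‖ₑ ^ (p / θ) ∂μ) ^ θ * μ (ball x r) ^ (1 - θ)) := by
  -- `κ` is the constant of the quasi-triangle inequality `(a + b) ^ p ≤ κ (a ^ p + b ^ p)`
  set κ := ENNReal.LpAddConst (ENNReal.ofReal p)⁻¹
  have htriangle : ∀ y, ‖u x‖ₑ ^ p ≤ κ * (‖u x - u y‖ₑ ^ p + ‖u y‖ₑ ^ p) := fun y =>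
    calc ‖u x‖ₑ ^ p ≤ (‖u x - u y‖ₑ + ‖u y‖ₑ) ^ p := by
          gcongr
          simpa using enorm_add_le (u x - u y) (u y)
      _ ≤ _ := ENNReal.rpow_add_le_mul_rpow_add_rpow' _ _ hp
  have hdiff : Measurable fun y => ‖u x - u y‖ₑ ^ p := by fun_prop
  have hpow : (fun y => (‖u y‖ₑ ^ p) ^ θ⁻¹) = fun y => ‖u y‖ₑ ^ (p / θ) := by
    simp only [← ENNReal.rpow_mul, div_eq_mul_inv]
  calc μ (ball x r) * ‖u x‖ₑ ^ p = ∫⁻ _ in ball x r, ‖u x‖ₑ ^ p ∂μ := by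
        rw [setLIntegral_const, mul_comm]
    _ ≤ ∫⁻ y in ball x r, κ * (‖u x - u y‖ₑ ^ p + ‖u y‖ₑ ^ p) ∂μ := lintegral_mono htriangle
    _ = κ * (∫⁻ y in ball x r, ‖u x - u y‖ₑ ^ p ∂μ + ∫⁻ y in ball x r, ‖u y‖ₑ ^ p ∂μ) := by
        rw [lintegral_const_mul' _ _ (ENNReal.LpAddConst_lt_top _).ne, lintegral_add_left hdiff]
    _ ≤ _ := by
        gcongr
        · exact setLIntegral_ball_le_ofReal_rpow_mul_lintegral_div _ x r hβ
        · rw [← hpow]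
          exact setLIntegral_le_lintegral_rpow_mul_measure_rpow (by fun_prop) hθ₀ hθ₁ _

noncomputable def gagliardoEnergy {E : Type*} [SeminormedAddCommGroup E] [MeasurableSpace E]
    (μ : Measure E) (β p : ℝ) (u : E → ℝ) : ℝ≥0∞ :=
  ∫⁻ x, ∫⁻ y, ‖u x - u y‖ₑ ^ p / ENNReal.ofReal (‖x - y‖ ^ β) ∂μ ∂μ

theorem gagliardoEnergy_mono {E : Type*} [SeminormedAddCommGroup E] [MeasurableSpace E]
    {μ : Measure E} {β p : ℝ} (hp : 0 ≤ p) {u v : E → ℝ}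
    (h : ∀ x y, ‖v x - v y‖ ≤ ‖u x - u y‖) :
    gagliardoEnergy μ β p v ≤ gagliardoEnergy μ β p u :=
  lintegral_mono fun x => lintegral_mono fun y => by
    gcongr
    exact enorm_le_iff_norm_le.2 (h x y)

section Truncation

variable {α : Type*} [MeasurableSpace α] {μ : Measure α} {f : α → ℝ≥0∞}

theorem lintegral_rpow_eq_iSup_lintegral_min_rpow (hf : Measurable f) {q : ℝ} (hq : 0 < q) :
    ∫⁻ x, f x ^ q ∂μ = ⨆ k : ℕ, ∫⁻ x, min (f x) k ^ q ∂μ := by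
  rw [← lintegral_iSup (fun k => by fun_prop) fun k l hkl x => by dsimp only; gcongr]
  congr with x
  have hsup : ⨆ k : ℕ, min (f x) k = f x := by
    rw [← inf_iSup_eq, ENNReal.iSup_natCast, inf_top_eq]
  calc f x ^ q = (⨆ k : ℕ, min (f x) k) ^ q := by rw [hsup]
    _ = ⨆ k : ℕ, min (f x) k ^ q := (ENNReal.orderIsoRpow q hq).map_iSup _

theorem lintegral_min_rpow_ne_top {k : ℝ≥0∞} (hk : k ≠ ∞) {p q : ℝ} (hp : 0 ≤ p) (hpq : p ≤ q)
    (hf : ∫⁻ x, f x ^ p ∂μ ≠ ∞) : ∫⁻ x, min (f x) k ^ q ∂μ ≠ ∞ := by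
  have hbound : ∀ x, min (f x) k ^ q ≤ k ^ (q - p) * f x ^ p := fun x =>
    calc min (f x) k ^ q = min (f x) k ^ (q - p) * min (f x) k ^ p := by
          rw [← ENNReal.rpow_add_of_nonneg _ _ (sub_nonneg.2 hpq) hp, sub_add_cancel]
      _ ≤ k ^ (q - p) * f x ^ p := by gcongr <;> simp
  refine ne_top_of_le_ne_top ?_ (lintegral_mono hbound)
  rw [lintegral_const_mul' _ _ (ENNReal.rpow_ne_top_of_nonneg (sub_nonneg.2 hpq) hk)]
  exact ENNReal.mul_ne_top (ENNReal.rpow_ne_top_of_nonneg (sub_nonneg.2 hpq) hk) hf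

end Truncation

section AddHaar

variable {E : Type*} [NormedAddCommGroup E] [NormedSpace ℝ E] [FiniteDimensional ℝ E]
  [MeasurableSpace E] [BorelSpace E] {μ : Measure E} [μ.IsAddHaarMeasure] {N : ℕ} {s p : ℝ}

theorem addHaar_ball_toReal [Nontrivial E] (hN : finrank ℝ E = N) (x : E) {R : ℝ≥0∞}
    (hR : R ≠ ∞) : μ (ball x R.toReal) = R ^ (N : ℝ) * μ (ball 0 1) := by
  rw [Measure.addHaar_ball μ x ENNReal.toReal_nonneg, hN, ← Real.rpow_natCast,
    ← ENNReal.ofReal_rpow_of_nonneg ENNReal.toReal_nonneg (Nat.cast_nonneg N),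
    ENNReal.ofReal_toReal hR]

theorem rpow_enorm_le_rpow_mul_add_rpow_neg_mul (hN : finrank ℝ E = N) (hs : 0 < s) (hp : 0 < p)
    (hsp : s * p < N) {u : E → ℝ} (hu : Measurable u) (x : E) {R : ℝ≥0∞} (hR₀ : R ≠ 0)
    (hR : R ≠ ∞) :
    ‖u x‖ₑ ^ p ≤
      R ^ (s * p) * (ENNReal.LpAddConst (ENNReal.ofReal p)⁻¹ * (μ (ball 0 1))⁻¹ *
        ∫⁻ y, ‖u x - u y‖ₑ ^ p / ENNReal.ofReal (‖x - y‖ ^ (N + s * p)) ∂μ) +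
      R ^ (-(N - s * p)) * (ENNReal.LpAddConst (ENNReal.ofReal p)⁻¹ *
        μ (ball 0 1) ^ (s * p / N - 1) *
        (∫⁻ y, ‖u y‖ₑ ^ (N * p / (N - s * p)) ∂μ) ^ ((N - s * p) / N)) := by
  set κ := ENNReal.LpAddConst (ENNReal.ofReal p)⁻¹
  set c := μ (ball (0 : E) 1)
  set F := ∫⁻ y, ‖u x - u y‖ₑ ^ p / ENNReal.ofReal (‖x - y‖ ^ (N + s * p)) ∂μ
  set Λ := ∫⁻ y, ‖u y‖ₑ ^ (N * p / (N - s * p)) ∂μ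
  have hsp₀ : 0 < s * p := mul_pos hs hp
  have hN₀ : (0 : ℝ) < N := hsp₀.trans hsp
  have : Nontrivial E := Module.nontrivial_of_finrank_pos (R := ℝ) (by rw [hN]; exact_mod_cast hN₀)
  have hc₀ : c ≠ 0 := (measure_ball_pos μ 0 one_pos).ne'
  have hc : c ≠ ∞ := measure_ball_lt_top.ne
  have hθ₀ : 0 < (N - s * p) / N := div_pos (by linarith) hN₀
  have hθ₁ : (N - s * p) / N < 1 := (div_lt_one hN₀).2 (by linarith)
  have hestimate := measure_ball_mul_rpow_enorm_le (μ := μ) hu x R.toReal hp.le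
    (by positivity : (0 : ℝ) ≤ N + s * p) hθ₀ hθ₁
  rw [show p / ((N - s * p) / N) = N * p / (N - s * p) by field_simp,
    show 1 - (N - s * p) / N = s * p / N by field_simp; ring, addHaar_ball_toReal hN x hR,
    ← ENNReal.ofReal_rpow_of_nonneg ENNReal.toReal_nonneg (by positivity),
    ENNReal.ofReal_toReal hR] at hestimate
  have hRN₀ : R ^ (N : ℝ) ≠ 0 := by simp [hR₀]
  have hRN : R ^ (N : ℝ) ≠ ∞ := ENNReal.rpow_ne_top_of_nonneg (Nat.cast_nonneg N) hR
  refine (ENNReal.mul_le_mul_iff_right (mul_ne_zero hRN₀ hc₀) (ENNReal.mul_ne_top hRN hc)).1 ?_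
  refine hestimate.trans_eq ?_
  have hRsp : R ^ (N : ℝ) * R ^ (s * p) = R ^ (N + s * p) := (ENNReal.rpow_add _ _ hR₀ hR).symm
  have hRneg : R ^ (N : ℝ) * R ^ (-(N - s * p)) = R ^ (s * p) := by
    rw [← ENNReal.rpow_add _ _ hR₀ hR]; ring_nf
  have hcsp : c * c ^ (s * p / N - 1) = c ^ (s * p / N) := by
    conv_lhs => enter [1]; rw [← ENNReal.rpow_one c]
    rw [← ENNReal.rpow_add _ _ hc₀ hc]; ring_nf
  have hball_rpow : (R ^ (N : ℝ) * c) ^ (s * p / N) = R ^ (s * p) * c ^ (s * p / N) := by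
    rw [ENNReal.mul_rpow_of_nonneg _ _ (by positivity), ← ENNReal.rpow_mul]
    field_simp
  calc κ * (R ^ (N + s * p) * F + Λ ^ ((N - s * p) / N) * (R ^ (N : ℝ) * c) ^ (s * p / N))
      = κ * ((R ^ (N : ℝ) * R ^ (s * p)) * (c * c⁻¹) * F +
          (R ^ (N : ℝ) * R ^ (-(N - s * p))) * (c * c ^ (s * p / N - 1)) *
            Λ ^ ((N - s * p) / N)) := by
        rw [hRsp, hRneg, hcsp, hball_rpow, ENNReal.mul_inv_cancel hc₀ hc]; ring
    _ = _ := by ring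

theorem exists_lintegral_rpow_le_mul_gagliardoEnergy_of_ne_top (hN : finrank ℝ E = N)
    (hs : 0 < s) (hp : 0 < p) (hsp : s * p < N) :
    ∃ K : ℝ≥0∞, K ≠ ∞ ∧ ∀ u : E → ℝ, Measurable u →
      ∫⁻ x, ‖u x‖ₑ ^ (N * p / (N - s * p)) ∂μ ≠ ∞ →
      (∫⁻ x, ‖u x‖ₑ ^ (N * p / (N - s * p)) ∂μ) ^ ((N - s * p) / N) ≤
        K * gagliardoEnergy μ (N + s * p) p u := by
  set κ := ENNReal.LpAddConst (ENNReal.ofReal p)⁻¹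
  set c := μ (ball (0 : E) 1)
  have hsp₀ : 0 < s * p := mul_pos hs hp
  have hN₀ : (0 : ℝ) < N := hsp₀.trans hsp
  have hNsp : 0 < (N : ℝ) - s * p := by linarith
  have : Nontrivial E := Module.nontrivial_of_finrank_pos (R := ℝ) (by rw [hN]; exact_mod_cast hN₀)
  have hc₀ : c ≠ 0 := (measure_ball_pos μ 0 one_pos).ne'
  have hc : c ≠ ∞ := measure_ball_lt_top.ne
  have hκ : κ ≠ ∞ := (ENNReal.LpAddConst_lt_top _).ne
  have hA : κ * c ^ (s * p / N - 1) ≠ ∞ :=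
    ENNReal.mul_ne_top hκ (ENNReal.rpow_ne_top_of_ne_zero hc₀ hc)
  have hG : κ * c⁻¹ ≠ ∞ := ENNReal.mul_ne_top hκ (ENNReal.inv_ne_top.2 hc₀)
  set K := 2 ^ (N / (N - s * p)) * (κ * c ^ (s * p / N - 1)) ^ (s * p / (N - s * p)) *
    (κ * c⁻¹)
  refine ⟨K, by finiteness, fun u hu hΛ => ?_⟩
  set Λ := ∫⁻ x, ‖u x‖ₑ ^ (N * p / (N - s * p)) ∂μ
  set F := fun x => ∫⁻ y, ‖u x - u y‖ₑ ^ p / ENNReal.ofReal (‖x - y‖ ^ (N + s * p)) ∂μ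
  rcases eq_or_ne Λ 0 with hΛ₀ | hΛ₀
  · rw [hΛ₀, ENNReal.zero_rpow_of_pos (div_pos hNsp hN₀)]
    exact zero_le
  have hpointwise : ∀ x, ‖u x‖ₑ ^ (N * p / (N - s * p)) ≤
      K * Λ ^ (s * p / N) * F x := by
    intro x
    have hA₀ : κ * c ^ (s * p / N - 1) * Λ ^ ((N - s * p) / N) ≠ 0 := by
      simp [κ, ENNReal.LpAddConst_ne_zero, ENNReal.rpow_eq_zero_iff, hc₀, hc, hΛ₀, hΛ]
    have hopt := ENNReal.rpow_le_of_forall_le_rpow_mul_add_rpow_neg_mul hsp₀.le hNsp hA₀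
      (by finiteness) (by finiteness)
      (fun R hR₀ hR => rpow_enorm_le_rpow_mul_add_rpow_neg_mul (μ := μ) hN hs hp hsp hu x hR₀ hR)
    rw [add_sub_cancel, ← ENNReal.rpow_mul, ENNReal.mul_rpow_of_nonneg _ _ (by positivity),
      ← ENNReal.rpow_mul Λ, show p * (N / (N - s * p)) = N * p / (N - s * p) by ring,
      show (N - s * p) / N * (s * p / (N - s * p)) = s * p / N by field_simp] at hopt
    exact hopt.trans_eq (by ring)
  have hintegral : Λ ≤ K * gagliardoEnergy μ (N + s * p) p u * Λ ^ (s * p / N) :=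
    calc Λ ≤ ∫⁻ x, K * Λ ^ (s * p / N) * F x ∂μ := lintegral_mono hpointwise
      _ = K * Λ ^ (s * p / N) * gagliardoEnergy μ (N + s * p) p u :=
        lintegral_const_mul' _ _ (ENNReal.mul_ne_top (by finiteness)
          (ENNReal.rpow_ne_top_of_nonneg (by positivity) hΛ))
      _ = _ := by ring
  rw [show ((N : ℝ) - s * p) / N = 1 - s * p / N by field_simp]
  exact ENNReal.rpow_one_sub_le_of_le_mul_rpow hΛ₀ hΛ hintegral

theorem exists_lintegral_rpow_le_mul_gagliardoEnergy (hN : finrank ℝ E = N) (hs : 0 < s)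
    (hp : 0 < p) (hsp : s * p < N) :
    ∃ K : ℝ≥0∞, K ≠ ∞ ∧ ∀ u : E → ℝ, Measurable u → MemLp u (ENNReal.ofReal p) μ →
      (∫⁻ x, ‖u x‖ₑ ^ (N * p / (N - s * p)) ∂μ) ^ ((N - s * p) / N) ≤
        K * gagliardoEnergy μ (N + s * p) p u := by
  obtain ⟨K, hK, hbounded⟩ :=
    exists_lintegral_rpow_le_mul_gagliardoEnergy_of_ne_top (μ := μ) hN hs hp hsp
  refine ⟨K, hK, fun u hu hmem => ?_⟩
  have hN₀ : (0 : ℝ) < N := (mul_pos hs hp).trans hsp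
  have hNsp : 0 < (N : ℝ) - s * p := by linarith
  have hpq : p ≤ N * p / (N - s * p) := by
    rw [le_div_iff₀ hNsp]; nlinarith [mul_pos hs hp]
  have hup : ∫⁻ x, ‖u x‖ₑ ^ p ∂μ ≠ ∞ := by
    simpa [ENNReal.toReal_ofReal hp.le] using (lintegral_rpow_enorm_lt_top_of_eLpNorm_lt_top
      (by simpa using hp) ENNReal.ofReal_ne_top hmem.eLpNorm_lt_top).ne
  have htrunc : ∀ k : ℕ, (∫⁻ x, min ‖u x‖ₑ k ^ (N * p / (N - s * p)) ∂μ) ^ ((N - s * p) / N) ≤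
      K * gagliardoEnergy μ (N + s * p) p u := by
    intro k
    set v := fun x => min ‖u x‖ (k : ℝ)
    have hv : ∀ x, ‖v x‖ₑ = min ‖u x‖ₑ k := fun x => by
      rw [Real.enorm_of_nonneg (le_min (norm_nonneg _) k.cast_nonneg), ENNReal.ofReal_min,
        ofReal_norm, ENNReal.ofReal_natCast]
    have hlip : ∀ x y, ‖v x - v y‖ ≤ ‖u x - u y‖ := fun x y => by
      simpa [v, Real.norm_eq_abs] using (abs_min_sub_min_le_max ‖u x‖ k ‖u y‖ k).trans
        (max_le (abs_norm_sub_norm_le _ _) (by simp))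
    have hbound := hbounded v (by fun_prop) (by
      simp_rw [hv]; exact lintegral_min_rpow_ne_top (ENNReal.natCast_ne_top k) hp.le hpq hup)
    simp_rw [hv] at hbound
    exact hbound.trans (by gcongr; exact gagliardoEnergy_mono hp.le hlip)
  rw [lintegral_rpow_eq_iSup_lintegral_min_rpow hu.enorm (by positivity),
    ← ENNReal.le_rpow_inv_iff (div_pos hNsp hN₀)]
  exact iSup_le fun k => (ENNReal.le_rpow_inv_iff (div_pos hNsp hN₀)).2 (htrunc k)

end AddHaar

theorem fractional_sobolev_embedding_general
    {N : ℕ} {s p : ℝ} (hs0 : 0 < s) (hp : 1 ≤ p)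
    (hsp : s * p < N) :
    ∃ C : ℝ, 0 < C ∧
      ∀ u : EuclideanSpace ℝ (Fin N) → ℝ, Measurable u →
        MemLp u (ENNReal.ofReal p) (volume : Measure (EuclideanSpace ℝ (Fin N))) →
        (∫⁻ x, ‖u x‖₊ ^ (N * p / (N - s * p))) ^ ((N - s * p) / N) ≤
          ENNReal.ofReal C *
            ∫⁻ x, ∫⁻ y, ‖u x - u y‖₊ ^ p / ENNReal.ofReal (‖x - y‖ ^ (N + s * p)) := by
  obtain ⟨K, hK, hsobolev⟩ := exists_lintegral_rpow_le_mul_gagliardoEnergy (μ := volume)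
    (finrank_euclideanSpace_fin) hs0 (by linarith) hsp
  have hKC : K ≤ ENNReal.ofReal (K.toReal + 1) :=
    calc K = ENNReal.ofReal K.toReal := (ENNReal.ofReal_toReal hK).symm
      _ ≤ ENNReal.ofReal (K.toReal + 1) := by gcongr; linarith
  exact ⟨K.toReal + 1, by positivity, fun u hu hmem =>
    (hsobolev u hu hmem).trans (mul_le_mul_left hKC _)⟩

/-- **Fractional Sobolev embedding theorem.** For `s ∈ (0,1)`, `p ∈ [1,∞)` with
`sp < N`, there is a constant `C = C(N,s,p) > 0` such that
`‖u‖_{L^{p*}}^p ≤ C ∬ |u(x)-u(y)|^p / |x-y|^{N+sp}` for all `u ∈ W^{s,p}(ℝ^N)`,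
where `p* = Np/(N-sp)`. -/
theorem fractional_sobolev_embedding
    {N : ℕ} {s p : ℝ} (hs0 : 0 < s) (hs1 : s < 1) (hp : 1 ≤ p)
    (hsp : s * p < N) :
    ∃ C : ℝ, 0 < C ∧
      ∀ u : EuclideanSpace ℝ (Fin N) → ℝ, Measurable u →
        MemLp u (ENNReal.ofReal p) (volume : Measure (EuclideanSpace ℝ (Fin N))) →
        (∫⁻ x, ‖u x‖₊ ^ (N * p / (N - s * p))) ^ ((N - s * p) / N) ≤
          ENNReal.ofReal C *
            ∫⁻ x, ∫⁻ y, ‖u x - u y‖₊ ^ p / ENNReal.ofReal (‖x - y‖ ^ (N + s * p)) :=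
  fractional_sobolev_embedding_general hs0 hp hsp
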